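/- arXiv:1602.06444 — 3 statements merged into one kernel-verified Lean document; each statement's English description precedes it below -/
import Mathlib

section
/- The right-Radau polynomial R⁺_{k+1}(ξ) = P_{k+1}(ξ) − P_k(ξ) has k+1 real distinct roots, all lying in the interval [−1, 1], with the largest root equal to 1. -/
open Polynomial

noncomputable def legendre (n : ℕ) : Polynomial ℝ :=
  (1 / (2 ^ n * n.factorial) : ℝ) • (Polynomial.derivative^[n] ((Polynomial.X ^ 2 - 1) ^ n))

lemma legendre_diff (k : ℕ) : legendre (k+1) - legendre k
    = (1/(2^k * k.factorial) : ℝ) • derivative^[k] ((X - 1)^(k+1) * (X + 1)^k : ℝ[X]) := by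
  have h1 : derivative ((X^2 - 1 : ℝ[X])^(k+1)) = C (2*(k+1) : ℝ) * (X * (X^2-1)^k) := by
    rw [derivative_pow]
    simp only [derivative_sub, derivative_X_pow, derivative_one, Nat.add_sub_cancel]
    push_cast
    ring_nf
    rw [show (2 + (k:ℝ)*2) = (1+k)*2 by ring, C_mul]
    ring
  have h2 : derivative^[k+1] ((X^2 - 1 : ℝ[X])^(k+1))
      = C (2*(k+1):ℝ) * derivative^[k] (X * (X^2-1)^k) := by
    rw [Function.iterate_succ_apply, h1, iterate_derivative_C_mul]
  have h3 : ((X - 1 : ℝ[X])^(k+1) * (X + 1)^k) = X * (X^2-1)^k - (X^2-1)^k := by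
    have hx : (X^2 - 1 : ℝ[X]) = (X-1)*(X+1) := by ring
    rw [hx, mul_pow, pow_succ]
    ring
  have hc : (1/(2^(k+1) * (k+1).factorial) : ℝ) * (2*(k+1)) = 1/(2^k * k.factorial) := by
    have h2k : (2:ℝ)^k ≠ 0 := by positivity
    have hf : (k.factorial : ℝ) ≠ 0 := Nat.cast_ne_zero.mpr k.factorial_ne_zero
    rw [Nat.factorial_succ]; push_cast
    field_simp [Nat.factorial_succ]
    ring
  unfold legendre
  rw [h2, ← smul_eq_C_mul, smul_smul, hc, h3, iterate_derivative_sub, smul_sub]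

lemma dvd_derivative_of_pow_dvd {n : ℕ} {a p : ℝ[X]} (h : a ^ n ∣ p) :
    a ^ (n - 1) ∣ derivative p := by
  obtain ⟨g, rfl⟩ := h
  rw [derivative_mul, derivative_pow]
  exact dvd_add (dvd_mul_of_dvd_left (dvd_mul_of_dvd_left (dvd_mul_left _ _) _) _)
    (dvd_mul_of_dvd_left (pow_dvd_pow a (Nat.sub_le n 1)) _)

lemma coprime_X_sub {a b : ℝ} (h : a ≠ b) : IsCoprime (X - C a : ℝ[X]) (X - C b) :=
  isCoprime_X_sub_C_of_isUnit_sub (isUnit_iff_ne_zero.mpr (sub_ne_zero.mpr h))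

lemma main_ind (k : ℕ) : ∀ j, j ≤ k →
    ∃ r : ℕ → ℝ, (∀ a b, a < b → b < j → r a < r b) ∧
      (∀ i, i < j → r i ∈ Set.Ioo (-1:ℝ) 1) ∧
      ((X + 1) ^ (k - j) * (X - 1) ^ (k + 1 - j) * ∏ i ∈ Finset.range j, (X - C (r i))) ∣
        derivative^[j] ((X - 1) ^ (k + 1) * (X + 1) ^ k : ℝ[X]) := by
  intro j
  induction j with
  | zero =>
    intro _
    exact ⟨fun _ => 0, by omega, by omega, by simp [mul_comm]⟩
  | succ j ih =>
    intro hjk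
    obtain ⟨r, hmono, hIoo, hdvd⟩ := ih (by omega)
    set p : ℝ[X] := derivative^[j] ((X - 1) ^ (k + 1) * (X + 1) ^ k : ℝ[X]) with hp
    set T : ℕ → ℝ := fun n => if n = 0 then -1 else if n ≤ j then r (n-1) else 1 with hT
    have hT0 : T 0 = -1 := by simp [hT]
    have hTtop : ∀ m, j < m → T m = 1 := by
      intro m hm; simp only [hT]; rw [if_neg (by omega), if_neg (by omega)]
    have hTmid : ∀ m, 0 < m → m ≤ j → T m = r (m-1) := by
      intro m h1 h2; simp only [hT]; rw [if_neg (by omega), if_pos h2]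
    have hstep : ∀ m, m ≤ j → T m < T (m+1) := by
      intro m hm
      rcases Nat.eq_zero_or_pos m with rfl | hm0
      · rw [hT0]
        rcases Nat.eq_zero_or_pos j with rfl | hj0
        · rw [hTtop 1 (by omega)]; norm_num
        · rw [hTmid 1 (by omega) (by omega)]
          exact (hIoo 0 (by omega)).1
      · rcases Nat.lt_or_ge m j with hmj | hmj
        · rw [hTmid m hm0 hm, hTmid (m+1) (by omega) (by omega)]
          exact hmono (m-1) m (by omega) hmj
        · have : m = j := by omega
          subst this
          rw [hTmid m hm0 (le_refl _), hTtop (m+1) (by omega)]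
          exact (hIoo (m-1) (by omega)).2
    have hTmono : ∀ b a, a < b → b ≤ j + 1 → T a < T b := by
      intro b
      induction b with
      | zero => omega
      | succ n ihn =>
        intro a ha hb
        rcases Nat.lt_or_ge a n with h | h
        · exact (ihn a h (by omega)).trans (hstep n (by omega))
        · have : a = n := by omega
          subst this
          exact hstep a (by omega)
    -- eval of p at the points T m, m ≤ j+1, is zero
    obtain ⟨g, hg⟩ := hdvd
    have heval : ∀ m, m ≤ j + 1 → eval (T m) p = 0 := by
      intro m hm
      rw [hg]
      rcases Nat.eq_zero_or_pos m with rfl | hm0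
      · have h1 : eval (T 0) ((X + 1 : ℝ[X]) ^ (k - j)) = 0 := by
          rw [hT0, eval_pow]
          simp only [eval_add, eval_X, eval_one, neg_add_cancel]
          exact zero_pow (by omega)
        simp [eval_mul, h1]
      · rcases Nat.lt_or_ge j m with hjm | hjm
        · have h1 : eval (T m) ((X - 1 : ℝ[X]) ^ (k + 1 - j)) = 0 := by
            rw [hTtop m (by omega), eval_pow]
            simp only [eval_sub, eval_X, eval_one, sub_self]
            exact zero_pow (by omega)
          simp [eval_mul, h1]
        · have h1 : eval (T m) (∏ i ∈ Finset.range j, (X - C (r i) : ℝ[X])) = 0 := by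
            rw [eval_prod]
            refine Finset.prod_eq_zero (Finset.mem_range.mpr (show m - 1 < j by omega)) ?_
            rw [hTmid m hm0 hjm]
            simp
          simp [eval_mul, h1]
    -- Rolle
    have key : ∀ m, ∃ x, m ≤ j →
        x ∈ Set.Ioo (T m) (T (m+1)) ∧ eval x (derivative p) = 0 := by
      intro m
      by_cases hm : m ≤ j
      · obtain ⟨c, hc, hc'⟩ := exists_deriv_eq_zero (f := fun x => eval x p) (hstep m hm)
          (Polynomial.continuous p).continuousOn
          ((heval m (by omega)).trans (heval (m+1) (by omega)).symm)
        refine ⟨c, fun _ => ⟨hc, ?_⟩⟩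
        rw [← Polynomial.deriv]
        exact hc'
      · exact ⟨0, by omega⟩
    choose s hs using key
    have hsIoo : ∀ m, m ≤ j → s m ∈ Set.Ioo (T m) (T (m+1)) := fun m hm => (hs m hm).1
    have hsmono : ∀ a b, a < b → b < j + 1 → s a < s b := by
      intro a b hab hb
      have h1 : s a < T (a+1) := (hsIoo a (by omega)).2
      have h2 : T b < s b := (hsIoo b (by omega)).1
      have h3 : T (a+1) ≤ T b := by
        rcases Nat.eq_or_lt_of_le (Nat.succ_le_of_lt hab) with h | h
        · exact le_of_eq (congrArg T h)
        · exact le_of_lt (hTmono b (a+1) h (by omega))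
      linarith
    have hsIoo' : ∀ m, m < j + 1 → s m ∈ Set.Ioo (-1:ℝ) 1 := by
      intro m hm
      have h1 : T m < s m := (hsIoo m (by omega)).1
      have h2 : s m < T (m+1) := (hsIoo m (by omega)).2
      constructor
      · rcases Nat.eq_zero_or_pos m with rfl | hm0
        · rw [← hT0]; exact h1
        · have := hTmono m 0 hm0 (by omega)
          rw [hT0] at this; linarith
      · rcases Nat.eq_or_lt_of_le (show m + 1 ≤ j + 1 by omega) with h | h
        · rw [← hTtop (j+1) (by omega), ← h]; exact h2
        · have := hTmono (j+1) (m+1) h (le_refl _)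
          rw [hTtop (j+1) (by omega)] at this; linarith
    -- divisibility of derivative p
    have hA : ((X + 1 : ℝ[X])) ^ (k - (j+1)) ∣ derivative p := by
      have h : ((X + 1 : ℝ[X])) ^ (k - j) ∣ p :=
        dvd_trans (dvd_mul_of_dvd_left (dvd_mul_right _ _) _) ⟨g, hg⟩
      have := dvd_derivative_of_pow_dvd h
      rwa [show k - j - 1 = k - (j+1) by omega] at this
    have hB : ((X - 1 : ℝ[X])) ^ (k + 1 - (j+1)) ∣ derivative p := by
      have h : ((X - 1 : ℝ[X])) ^ (k + 1 - j) ∣ p :=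
        dvd_trans (dvd_mul_of_dvd_left (dvd_mul_left _ _) _) ⟨g, hg⟩
      have := dvd_derivative_of_pow_dvd h
      rwa [show k + 1 - j - 1 = k + 1 - (j+1) by omega] at this
    have hP : (∏ i ∈ Finset.range (j+1), (X - C (s i) : ℝ[X])) ∣ derivative p := by
      refine Finset.prod_dvd_of_coprime ?_ ?_
      · intro a ha b hb hab
        simp only [Finset.coe_range, Set.mem_Iio] at ha hb
        rcases Nat.lt_or_ge a b with h | h
        · exact coprime_X_sub (ne_of_lt (hsmono a b h hb))
        · exact coprime_X_sub (ne_of_gt (hsmono b a (by omega) ha))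
      · intro i hi
        have hi' := Finset.mem_range.mp hi
        exact dvd_iff_isRoot.mpr ((hs i (by omega : i ≤ j)).2)
    have e1 : (X + 1 : ℝ[X]) = X - C (-1) := by simp
    have e2 : (X - 1 : ℝ[X]) = X - C 1 := by simp
    have hAB : IsCoprime ((X + 1 : ℝ[X]) ^ (k - (j+1))) ((X - 1) ^ (k + 1 - (j+1))) := by
      refine IsCoprime.pow ?_
      rw [e1, e2]
      exact coprime_X_sub (by norm_num)
    have hAP : IsCoprime ((X + 1 : ℝ[X]) ^ (k - (j+1)))
        (∏ i ∈ Finset.range (j+1), (X - C (s i))) := by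
      refine IsCoprime.pow_left (IsCoprime.prod_right fun i hi => ?_)
      have hi' := Finset.mem_range.mp hi
      rw [e1]
      exact coprime_X_sub (ne_of_lt (hsIoo' i hi').1)
    have hBP : IsCoprime ((X - 1 : ℝ[X]) ^ (k + 1 - (j+1)))
        (∏ i ∈ Finset.range (j+1), (X - C (s i))) := by
      refine IsCoprime.pow_left (IsCoprime.prod_right fun i hi => ?_)
      have hi' := Finset.mem_range.mp hi
      rw [e2]
      exact coprime_X_sub (ne_of_gt (hsIoo' i hi').2)
    refine ⟨s, hsmono, hsIoo', ?_⟩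
    rw [Function.iterate_succ_apply']
    exact (hAP.mul_left hBP).mul_dvd (hAB.mul_dvd hA hB) hP

lemma natDegree_iterate_derivative_eq (p : ℝ[X]) :
    ∀ j, j ≤ p.natDegree → (derivative^[j] p).natDegree = p.natDegree - j := by
  intro j
  induction j with
  | zero => simp
  | succ j ih =>
    intro hj
    rw [Function.iterate_succ_apply']
    have h1 : (derivative^[j] p).natDegree = p.natDegree - j := ih (by omega)
    have h2 : 0 < (derivative^[j] p).natDegree := by omega
    have := degree_derivative_eq (derivative^[j] p) h2
    rw [natDegree_eq_of_degree_eq_some this, h1]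
    omega

lemma Q_fact (k : ℕ) : ∃ r : ℕ → ℝ, (∀ a b, a < b → b < k → r a < r b) ∧
    (∀ i, i < k → r i ∈ Set.Ioo (-1:ℝ) 1) ∧ ∃ c : ℝ, c ≠ 0 ∧
    derivative^[k] ((X - 1)^(k+1) * (X+1)^k : ℝ[X])
      = C c * ((X - 1) * ∏ i ∈ Finset.range k, (X - C (r i))) := by
  obtain ⟨r, h1, h2, hdvd⟩ := main_ind k k le_rfl
  rw [Nat.sub_self, Nat.add_sub_cancel_left, pow_zero, pow_one, one_mul] at hdvd
  set Q : ℝ[X] := derivative^[k] ((X - 1)^(k+1) * (X+1)^k : ℝ[X]) with hQ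
  have e2 : (X - 1 : ℝ[X]) = X - C 1 := by simp
  have hDm : ((X - 1 : ℝ[X]) * ∏ i ∈ Finset.range k, (X - C (r i))).Monic := by
    rw [e2]
    exact (monic_X_sub_C 1).mul (monic_prod_of_monic _ _ fun i _ => monic_X_sub_C _)
  have hDdeg : ((X - 1 : ℝ[X]) * ∏ i ∈ Finset.range k, (X - C (r i))).natDegree = 1 + k := by
    rw [e2, (monic_X_sub_C (1:ℝ)).natDegree_mul (monic_prod_of_monic _ _ fun i _ => monic_X_sub_C _),
      natDegree_X_sub_C, natDegree_prod_of_monic _ _ fun i _ => monic_X_sub_C _]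
    simp [natDegree_X_sub_C]
  have hum : ((X - 1 : ℝ[X])^(k+1) * (X+1)^k).Monic := by
    have e1 : (X + 1 : ℝ[X]) = X + C 1 := by simp
    rw [e2, e1]
    exact ((monic_X_sub_C 1).pow _).mul ((monic_X_add_C 1).pow _)
  have hudeg : ((X - 1 : ℝ[X])^(k+1) * (X+1)^k).natDegree = 2*k+1 := by
    have e1 : (X + 1 : ℝ[X]) = X + C 1 := by simp
    rw [e2, e1, ((monic_X_sub_C (1:ℝ)).pow _).natDegree_mul ((monic_X_add_C (1:ℝ)).pow _),
      natDegree_pow, natDegree_pow, natDegree_X_sub_C, natDegree_X_add_C]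
    omega
  have hQdeg : Q.natDegree = k + 1 := by
    rw [hQ, natDegree_iterate_derivative_eq _ k (by omega), hudeg]
    omega
  have hQ0 : Q ≠ 0 := fun h => by simp [h] at hQdeg
  obtain ⟨q, hq⟩ := hdvd
  have hq0 : q ≠ 0 := fun h => hQ0 (by rw [hq, h, mul_zero])
  have hD0 : ((X - 1 : ℝ[X]) * ∏ i ∈ Finset.range k, (X - C (r i))) ≠ 0 := hDm.ne_zero
  have hqdeg : q.natDegree = 0 := by
    have := natDegree_mul hD0 hq0
    rw [← hq, hQdeg, hDdeg] at this
    omega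
  obtain ⟨c, rfl⟩ := natDegree_eq_zero.mp hqdeg
  refine ⟨r, h1, h2, c, fun h => hq0 (by rw [h, map_zero]), ?_⟩
  rw [hq]; ring

theorem right_radau_roots (k : ℕ) :
    ∃ r : Fin (k + 1) → ℝ, StrictMono r ∧
      (∀ i, r i ∈ Set.Icc (-1 : ℝ) 1) ∧
      r (Fin.last k) = 1 ∧
      (∀ x : ℝ, (legendre (k + 1) - legendre k).eval x = 0 ↔ ∃ i, r i = x) := by
  obtain ⟨r, hmono, hIoo, c, hc, hfac⟩ := Q_fact k
  have ha : (1/(2^k * k.factorial) : ℝ) ≠ 0 := by positivity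
  refine ⟨fun i => if (i : ℕ) < k then r i else 1, ?_, ?_, ?_, ?_⟩
  · intro a b hab
    simp only
    by_cases hb : (b : ℕ) < k
    · have hak : (a : ℕ) < k := lt_trans hab hb
      rw [if_pos hak, if_pos hb]
      exact hmono a b hab hb
    · rw [if_neg hb]
      by_cases hak : (a : ℕ) < k
      · rw [if_pos hak]
        exact (hIoo a hak).2
      · exfalso
        have := a.isLt
        have := b.isLt
        omega
  · intro i
    simp only
    by_cases hik : (i : ℕ) < k
    · rw [if_pos hik]
      exact Set.Ioo_subset_Icc_self (hIoo i hik)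
    · rw [if_neg hik]
      constructor <;> norm_num
  · simp
  · intro x
    rw [legendre_diff k, eval_smul, smul_eq_mul, mul_eq_zero, or_iff_right ha, hfac,
      eval_mul, eval_C, mul_eq_zero, or_iff_right hc, eval_mul, eval_prod, mul_eq_zero]
    constructor
    · rintro (h | h)
      · refine ⟨Fin.last k, ?_⟩
        show (if ((Fin.last k : Fin (k+1)) : ℕ) < k then r ((Fin.last k : Fin (k+1)) : ℕ) else 1) = x
        rw [Fin.val_last, if_neg (lt_irrefl k)]
        have : x - 1 = 0 := by simpa using h
        linarith
      · obtain ⟨i, hi, hzero⟩ := Finset.prod_eq_zero_iff.mp h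
        have hik := Finset.mem_range.mp hi
        refine ⟨⟨i, by omega⟩, ?_⟩
        simp only [if_pos hik]
        have : x - r i = 0 := by simpa using hzero
        linarith
    · rintro ⟨i, hi⟩
      by_cases hik : (i : ℕ) < k
      · right
        simp only [if_pos hik] at hi
        refine Finset.prod_eq_zero_iff.mpr ⟨i, Finset.mem_range.mpr hik, ?_⟩
        simp [hi]
      · left
        simp only [if_neg hik] at hi
        simp [← hi]
end

section
/- If k is even, the special Radau polynomial R*_{k+1}(ξ) = P_{k+1}(ξ) − (2θ−1)P_k(ξ), with 1/2 < θ ≤ 1, has no real root ξ with ξ > 1 and no real root ξ with ξ < −1; hence all k+1 of its roots lie in [−1,1]. -/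
open Polynomial

-- positivity of the product and its derivative to the right of all roots
lemma aux_pos (s : Multiset ℝ) (b : ℝ) (hs : ∀ r ∈ s, r ≤ b) (x : ℝ) (hx : b < x) :
    0 < ((s.map (fun r => X - C r)).prod).eval x ∧
      0 ≤ ((derivative ((s.map (fun r => X - C r)).prod)).eval x) ∧
      (s ≠ 0 → 0 < ((derivative ((s.map (fun r => X - C r)).prod)).eval x)) := by
  induction s using Multiset.induction with
  | empty => simp
  | cons r t ih =>
    have hr : r ≤ b := hs r (Multiset.mem_cons_self r t)
    have ht : ∀ r ∈ t, r ≤ b := fun r hr => hs r (Multiset.mem_cons_of_mem hr)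
    obtain ⟨h1, h2, h3⟩ := ih ht
    have hxr : 0 < x - r := by linarith
    constructor
    · simp only [Multiset.map_cons, Multiset.prod_cons, eval_mul, eval_sub, eval_X, eval_C]
      positivity
    constructor
    · simp only [Multiset.map_cons, Multiset.prod_cons, derivative_mul, eval_add, eval_mul,
        eval_sub, eval_X, eval_C, derivative_sub, derivative_X, derivative_C, sub_zero, one_mul]
      nlinarith
    · intro _
      simp only [Multiset.map_cons, Multiset.prod_cons, derivative_mul, eval_add, eval_mul,
        eval_sub, eval_X, eval_C, derivative_sub, derivative_X, derivative_C, sub_zero, one_mul]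
      nlinarith

-- sign control to the left of all roots
lemma aux_neg (s : Multiset ℝ) (a : ℝ) (hs : ∀ r ∈ s, a ≤ r) (x : ℝ) (hx : x < a) :
    0 < (-1 : ℝ) ^ (Multiset.card s) * ((s.map (fun r => X - C r)).prod).eval x ∧
      0 ≤ (-1 : ℝ) ^ (Multiset.card s + 1) *
        ((derivative ((s.map (fun r => X - C r)).prod)).eval x) ∧
      (s ≠ 0 → 0 < (-1 : ℝ) ^ (Multiset.card s + 1) *
        ((derivative ((s.map (fun r => X - C r)).prod)).eval x)) := by
  induction s using Multiset.induction with
  | empty => simp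
  | cons r t ih =>
    have hr : a ≤ r := hs r (Multiset.mem_cons_self r t)
    have ht : ∀ r ∈ t, a ≤ r := fun r hr => hs r (Multiset.mem_cons_of_mem hr)
    obtain ⟨h1, h2, h3⟩ := ih ht
    have hxr : x - r < 0 := by linarith
    have hcard : Multiset.card (r ::ₘ t) = Multiset.card t + 1 := by simp
    rw [pow_succ] at h2
    have k1 : 0 ≤ (-1:ℝ) ^ Multiset.card t * ((x - r) *
        eval x (derivative (Multiset.map (fun r => X - C r) t).prod)) := by
      nlinarith [mul_nonneg (le_of_lt (show (0:ℝ) < r - x by linarith)) h2]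
    constructor
    · simp only [Multiset.map_cons, Multiset.prod_cons, eval_mul, eval_sub, eval_X, eval_C, hcard,
        pow_succ]
      nlinarith
    constructor
    · simp only [Multiset.map_cons, Multiset.prod_cons, derivative_mul, eval_add, eval_mul,
        eval_sub, eval_X, eval_C, derivative_sub, derivative_X, derivative_C, sub_zero, one_mul,
        hcard, pow_succ]
      nlinarith
    · intro _
      simp only [Multiset.map_cons, Multiset.prod_cons, derivative_mul, eval_add, eval_mul,
        eval_sub, eval_X, eval_C, derivative_sub, derivative_X, derivative_C, sub_zero, one_mul,
        hcard, pow_succ]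
      nlinarith

-- one Rolle-type step
lemma deriv_step (a b : ℝ) (p : Polynomial ℝ) (hp : p ≠ 0)
    (hcard : Multiset.card p.roots = p.natDegree)
    (hroots : ∀ x ∈ p.roots, x ∈ Set.Icc a b) (hdeg : 1 ≤ p.natDegree) :
    derivative p ≠ 0 ∧ Multiset.card (derivative p).roots = p.natDegree - 1 ∧
      (derivative p).natDegree = p.natDegree - 1 ∧
      (∀ x ∈ (derivative p).roots, x ∈ Set.Icc a b) := by
  have hd0 : derivative p ≠ 0 := by
    intro h
    have := Polynomial.natDegree_eq_zero_of_derivative_eq_zero h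
    omega
  have hnd : (derivative p).natDegree = p.natDegree - 1 := by
    have := Polynomial.degree_derivative_eq p (by omega)
    have := Polynomial.natDegree_eq_of_degree_eq_some this
    simpa using this
  have hle : Multiset.card (derivative p).roots ≤ p.natDegree - 1 := by
    have h := (derivative p).card_roots'
    omega
  have hge : p.natDegree - 1 ≤ Multiset.card (derivative p).roots := by
    have := p.card_roots_le_derivative
    omega
  refine ⟨hd0, le_antisymm hle hge, hnd, ?_⟩
  intro x hx
  by_contra hxI
  have hx0 : (derivative p).eval x = 0 := by
    have := Polynomial.isRoot_of_mem_roots hx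
    exact this
  -- write p as leadingCoeff times the product of linear factors
  have hfac := Polynomial.C_leadingCoeff_mul_prod_multiset_X_sub_C (p := p) hcard
  have hL : p.leadingCoeff ≠ 0 := Polynomial.leadingCoeff_ne_zero.2 hp
  have hsne : p.roots ≠ 0 := by
    intro h
    rw [h] at hcard
    simp at hcard
    omega
  have hdM : (derivative ((p.roots.map (fun r => X - C r)).prod)).eval x = 0 := by
    have : derivative p = C p.leadingCoeff * derivative ((p.roots.map (fun r => X - C r)).prod) := by
      conv_lhs => rw [← hfac]
      rw [Polynomial.derivative_C_mul]
    rw [this] at hx0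
    simp only [eval_mul, eval_C] at hx0
    exact (mul_eq_zero.1 hx0).resolve_left hL
  rw [Set.mem_Icc, not_and_or, not_le, not_le] at hxI
  rcases hxI with hxa | hxb
  · have := (aux_neg p.roots a (fun r hr => (hroots r hr).1) x hxa).2.2 hsne
    rw [hdM] at this
    simp at this
  · have := (aux_pos p.roots b (fun r hr => (hroots r hr).2) x hxb).2.2 hsne
    rw [hdM] at this
    simp at this

lemma deriv_iter (a b : ℝ) (n : ℕ) : ∀ p : Polynomial ℝ, p ≠ 0 →
    Multiset.card p.roots = p.natDegree →
    (∀ x ∈ p.roots, x ∈ Set.Icc a b) → n ≤ p.natDegree →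
    (derivative^[n] p ≠ 0 ∧ Multiset.card (derivative^[n] p).roots = p.natDegree - n ∧
      (derivative^[n] p).natDegree = p.natDegree - n ∧
      (∀ x ∈ (derivative^[n] p).roots, x ∈ Set.Icc a b)) := by
  induction n with
  | zero =>
    intro p hp h1 h2 _
    simp only [Function.iterate_zero_apply, Nat.sub_zero]
    exact ⟨hp, h1, trivial, h2⟩
  | succ m ih =>
    intro p hp h1 h2 hn
    obtain ⟨hq0, hq1, hq2, hq3⟩ := ih p hp h1 h2 (by omega)
    have hdeg : 1 ≤ (derivative^[m] p).natDegree := by omega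
    obtain ⟨hr0, hr1, hr2, hr3⟩ := deriv_step a b _ hq0 (hq1.trans hq2.symm) hq3
      (by omega)
    rw [Function.iterate_succ_apply']
    exact ⟨hr0, by omega, by omega, hr3⟩

theorem special_radau_roots_even (k : ℕ) (hk : Even k) (θ : ℝ)
    (hθ : 1 / 2 < θ) (hθ1 : θ ≤ 1) :
    (∀ x : ℝ, 1 < x →
      (legendre (k + 1) - Polynomial.C (2 * θ - 1) * legendre k).eval x ≠ 0) ∧
    (∀ x : ℝ, x < -1 →
      (legendre (k + 1) - Polynomial.C (2 * θ - 1) * legendre k).eval x ≠ 0) ∧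
    (legendre (k + 1) - Polynomial.C (2 * θ - 1) * legendre k).roots.card = k + 1 ∧
    (∀ x ∈ (legendre (k + 1) - Polynomial.C (2 * θ - 1) * legendre k).roots,
      x ∈ Set.Icc (-1 : ℝ) 1) := by
  set c : ℝ := 2 * θ - 1 with hc
  have hc0 : 0 < c := by simp only [hc]; linarith
  have hc1 : c ≤ 1 := by simp only [hc]; linarith
  set W : Polynomial ℝ := (X - C c) * (X ^ 2 - 1) ^ k with hW
  set A : ℝ := 1 / (2 ^ k * k.factorial) with hA
  have hA0 : (0:ℝ) < A := by
    have : (0:ℝ) < 2 ^ k * k.factorial := by positivity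
    positivity
  -- the key Rodrigues-type identity
  have hid : legendre (k + 1) - C c * legendre k = A • derivative^[k] W := by
    have h1 : derivative ((X ^ 2 - 1 : Polynomial ℝ) ^ (k + 1))
        = (2 * (k + 1) : ℝ) • (X * (X ^ 2 - 1) ^ k) := by
      rw [derivative_pow, Polynomial.smul_eq_C_mul]
      simp only [derivative_sub, derivative_one, derivative_X_pow, sub_zero,
        Nat.add_sub_cancel, pow_one]
      push_cast
      simp only [map_mul, map_add, map_one, map_ofNat]
      ring
    have h2 : derivative^[k + 1] ((X ^ 2 - 1 : Polynomial ℝ) ^ (k + 1))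
        = (2 * (k + 1) : ℝ) • derivative^[k] (X * (X ^ 2 - 1) ^ k) := by
      rw [Function.iterate_succ_apply, h1, Polynomial.iterate_derivative_smul]
    have hfac : (1 / (2 ^ (k+1) * (k+1).factorial) : ℝ) * (2 * (k + 1)) = A := by
      rw [hA, Nat.factorial_succ]
      push_cast
      have h2k : (2:ℝ) ^ k ≠ 0 := by positivity
      have hkf : ((k.factorial : ℝ)) ≠ 0 := by positivity
      field_simp
      ring
    have hleg1 : legendre (k + 1) = A • derivative^[k] (X * (X ^ 2 - 1) ^ k) := by
      rw [legendre, h2, smul_smul, hfac]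
    have hleg2 : C c * legendre k = A • derivative^[k] (C c * (X ^ 2 - 1) ^ k) := by
      rw [legendre, Polynomial.iterate_derivative_C_mul, hA]
      rw [mul_smul_comm]
    rw [hleg1, hleg2, ← smul_sub, ← Polynomial.iterate_derivative_sub]
    congr 1
    rw [hW]
    ring
  -- roots of W
  have hmonW : W.Monic := by
    rw [hW]
    have h1 : (X ^ 2 - 1 : Polynomial ℝ) = (X - C 1) * (X - C (-1)) := by
      simp only [map_neg, map_one]
      ring
    rw [h1]
    exact (monic_X_sub_C c).mul (((monic_X_sub_C (1:ℝ)).mul (monic_X_sub_C (-1:ℝ))).pow k)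
  have hWne : W ≠ 0 := hmonW.ne_zero
  have hWdeg : W.natDegree = 2 * k + 1 := by
    rw [hW, Polynomial.natDegree_mul (X_sub_C_ne_zero c) (by
      intro h
      have := hmonW
      rw [hW, h, mul_zero] at this
      exact (not_monic_zero this))]
    rw [Polynomial.natDegree_X_sub_C, Polynomial.natDegree_pow]
    have : (X ^ 2 - 1 : Polynomial ℝ).natDegree = 2 := by
      have h1 : (X ^ 2 - 1 : Polynomial ℝ) = (X - C 1) * (X - C (-1)) := by
        simp only [map_neg, map_one]; ring
      rw [h1, Polynomial.natDegree_mul (X_sub_C_ne_zero _) (X_sub_C_ne_zero _),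
        Polynomial.natDegree_X_sub_C, Polynomial.natDegree_X_sub_C]
    rw [this]
    ring
  have hsq : (X ^ 2 - 1 : Polynomial ℝ) = (X - C 1) * (X - C (-1)) := by
    simp only [map_neg, map_one]; ring
  have hWroots : W.roots = {c} + k • ({1} + {-1} : Multiset ℝ) := by
    rw [hW, Polynomial.roots_mul (by rw [← hW]; exact hWne), Polynomial.roots_X_sub_C,
      Polynomial.roots_pow, hsq,
      Polynomial.roots_mul (mul_ne_zero (X_sub_C_ne_zero _) (X_sub_C_ne_zero _)),
      Polynomial.roots_X_sub_C, Polynomial.roots_X_sub_C]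
  have hWcard : Multiset.card W.roots = W.natDegree := by
    rw [hWroots, hWdeg]
    simp [Multiset.card_nsmul]
    omega
  have hWIcc : ∀ x ∈ W.roots, x ∈ Set.Icc (-1:ℝ) 1 := by
    intro x hx
    rw [hWroots] at hx
    rcases Multiset.mem_add.1 hx with h | h
    · rw [Multiset.mem_singleton.1 h]; exact ⟨by linarith, hc1⟩
    · have h' := Multiset.mem_of_mem_nsmul h
      rcases Multiset.mem_add.1 h' with h | h <;>
        rw [Multiset.mem_singleton.1 h] <;> constructor <;> norm_num
  obtain ⟨hD0, hDcard, hDdeg, hDIcc⟩ := deriv_iter (-1) 1 k W hWne hWcard hWIcc (by omega)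
  have hR0 : legendre (k + 1) - C c * legendre k ≠ 0 := by
    rw [hid]
    exact smul_ne_zero (ne_of_gt hA0) hD0
  have hRroots : (legendre (k + 1) - C c * legendre k).roots = (derivative^[k] W).roots := by
    rw [hid, Polynomial.roots_smul_nonzero _ (ne_of_gt hA0)]
  have hIcc : ∀ x ∈ (legendre (k + 1) - C c * legendre k).roots, x ∈ Set.Icc (-1:ℝ) 1 := by
    rw [hRroots]; exact hDIcc
  refine ⟨?_, ?_, ?_, hIcc⟩
  · intro x hx heval
    have hxr : x ∈ (legendre (k + 1) - C c * legendre k).roots := by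
      rw [Polynomial.mem_roots hR0]
      exact heval
    have := (hIcc x hxr).2
    linarith
  · intro x hx heval
    have hxr : x ∈ (legendre (k + 1) - C c * legendre k).roots := by
      rw [Polynomial.mem_roots hR0]
      exact heval
    have := (hIcc x hxr).1
    linarith
  · rw [hRroots, hDcard, hWdeg]
    omega
end

section
/- If k is odd and 1/2 < θ < 1, the special Radau polynomial R*_{k+1}(ξ) = (2θ−1)P_{k+1}(ξ) − P_k(ξ) has exactly one real root greater than 1 and no real root less than −1. -/
open Polynomial

namespace RadauAux

noncomputable def Y (n : ℕ) : Polynomial ℝ := (X ^ 2 - 1) ^ n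

noncomputable def cc (n : ℕ) : ℝ := 1 / (2 ^ n * n.factorial)

lemma cc_pos (n : ℕ) : 0 < cc n := by
  have h1 : (0:ℝ) < 2 ^ n := by positivity
  have h2 : (0:ℝ) < n.factorial := by exact_mod_cast n.factorial_pos
  unfold cc; positivity

lemma cc_succ (n : ℕ) : cc (n+1) * (2 * ((n:ℝ)+1)) = cc n := by
  unfold cc
  have h1 : (2:ℝ) ^ n ≠ 0 := by positivity
  have h2 : ((n.factorial : ℝ)) ≠ 0 := by exact_mod_cast n.factorial_pos.ne'
  have h3 : ((n:ℝ)+1) ≠ 0 := by positivity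
  rw [Nat.factorial_succ]
  push_cast
  field_simp
  ring

lemma legendre_eq (n : ℕ) : legendre n = C (cc n) * derivative^[n] (Y n) := by
  rw [legendre, smul_eq_C_mul]; rfl

lemma itd_succ (n : ℕ) (p : ℝ[X]) : derivative^[n+1] p = derivative^[n] (derivative p) :=
  Function.iterate_succ_apply _ _ _

lemma itd_succ' (n : ℕ) (p : ℝ[X]) : derivative^[n+1] p = derivative (derivative^[n] p) :=
  Function.iterate_succ_apply' _ _ _

/-- evaluate-and-ring helper is used inline -/

lemma LX (m : ℕ) (w : ℝ[X]) :
    derivative^[m+1] (X * w)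
      = X * derivative^[m+1] w + C ((m:ℝ)+1) * derivative^[m] w := by
  induction m generalizing w with
  | zero =>
      simp [derivative_mul]
      ring
  | succ m ih =>
      rw [itd_succ' (m+1) (X*w), ih, itd_succ' (m+1) w]
      simp only [derivative_add, derivative_mul, derivative_X, derivative_C, ← itd_succ']
      push_cast
      simp only [map_add, map_mul, map_one, map_ofNat, map_pow]
      ring

lemma LQ (m : ℕ) (w : ℝ[X]) :
    derivative^[m+1] ((X^2 - 1) * derivative w)
      = (X^2 - 1) * derivative^[m+2] w
        + C (2*((m:ℝ)+1)) * (X * derivative^[m+1] w)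
        + C (((m:ℝ)+1)*(m:ℝ)) * derivative^[m] w := by
  induction m generalizing w with
  | zero =>
      have h2 : derivative^[0+2] w = derivative (derivative w) := by
        rw [itd_succ', itd_succ']; simp
      have h1 : derivative^[0+1] (X^2-1 : ℝ[X]) = derivative (X^2-1 : ℝ[X]) := by simp
      have h0 : derivative^[0+1] ((X^2-1) * derivative w)
          = derivative ((X^2-1) * derivative w) := by simp
      rw [h0, h2, derivative_mul]
      simp only [Function.iterate_one, Function.iterate_zero, id_eq, Nat.cast_zero,
        derivative_sub, derivative_one, derivative_pow, derivative_X, Nat.cast_ofNat]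
      rw [itd_succ 0 w]
      simp only [Function.iterate_zero, id_eq]
      simp only [map_add, map_mul, map_one, map_ofNat, map_pow, map_zero, mul_zero,
        zero_mul, add_zero, sub_zero, mul_one, pow_one]
      ring
  | succ m ih =>
      rw [itd_succ' (m+1) _, ih, itd_succ' (m+2) w, itd_succ' (m+1) w]
      simp only [derivative_add, derivative_mul, derivative_sub, derivative_one,
        derivative_pow, derivative_X, derivative_C, ← itd_succ']
      push_cast
      simp only [map_add, map_mul, map_one, map_ofNat, map_pow]
      ring

end RadauAux

namespace RadauAux2
open RadauAux

lemma hYd (n : ℕ) : derivative (Y (n+1)) = C (2*((n:ℝ)+1)) * (X * Y n) := by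
  unfold Y
  rw [derivative_pow_succ]
  simp only [derivative_sub, derivative_one, derivative_pow, derivative_X, Nat.cast_ofNat,
    sub_zero, mul_one, pow_one, map_add, map_mul, map_one, map_ofNat]
  push_cast
  ring

lemma hZ (n : ℕ) : (X^2 - 1) * derivative (Y (n+1)) = C (2*((n:ℝ)+1)) * (X * Y (n+1)) := by
  rw [hYd]
  unfold Y
  ring

lemma identA (n : ℕ) :
    derivative (legendre (n+1)) = X * derivative (legendre n) + C ((n:ℝ)+1) * legendre n := by
  have h1 : derivative^[n+2] (Y (n+1))
      = C (2*((n:ℝ)+1)) * (X * derivative^[n+1] (Y n) + C ((n:ℝ)+1) * derivative^[n] (Y n)) := by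
    rw [itd_succ (n+1) (Y (n+1)), hYd, iterate_derivative_C_mul, LX]
  rw [legendre_eq (n+1), legendre_eq n, derivative_C_mul, derivative_C_mul,
    ← itd_succ' (n+1) (Y (n+1)), ← itd_succ' n (Y n), h1]
  have hcmul : C (cc (n+1)) * C (2*((n:ℝ)+1)) = C (cc n) := by
    rw [← C_mul, cc_succ]
  calc C (cc (n+1)) * (C (2*((n:ℝ)+1)) * (X * derivative^[n+1] (Y n)
          + C ((n:ℝ)+1) * derivative^[n] (Y n)))
      = (C (cc (n+1)) * C (2*((n:ℝ)+1))) * (X * derivative^[n+1] (Y n)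
          + C ((n:ℝ)+1) * derivative^[n] (Y n)) := by ring
    _ = C (cc n) * (X * derivative^[n+1] (Y n) + C ((n:ℝ)+1) * derivative^[n] (Y n)) := by
          rw [hcmul]
    _ = X * (C (cc n) * derivative^[n+1] (Y n)) + C ((n:ℝ)+1) * (C (cc n) * derivative^[n] (Y n)) := by
          ring

lemma identB (n : ℕ) :
    (X^2 - 1) * derivative (legendre (n+1))
      = C ((n:ℝ)+2) * (legendre (n+2) - X * legendre (n+1)) := by
  have k1 : derivative^[n+1] ((X^2-1) * derivative (Y (n+1)))
      = C (2*((n:ℝ)+1)) * (X * derivative^[n+1] (Y (n+1))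
          + C ((n:ℝ)+1) * derivative^[n] (Y (n+1))) := by
    rw [hZ, iterate_derivative_C_mul, LX]
  rw [LQ] at k1
  have k2 : derivative^[n+2] (Y (n+2))
      = C (2*((n:ℝ)+2)) * (X * derivative^[n+1] (Y (n+1))
          + C ((n:ℝ)+1) * derivative^[n] (Y (n+1))) := by
    rw [itd_succ (n+1) (Y (n+2)), hYd (n+1), iterate_derivative_C_mul, LX]
    push_cast
    ring
  have cs : cc (n+2) * (2*((n:ℝ)+2)) = cc (n+1) := by
    have h := cc_succ (n+1)
    push_cast at h
    convert h using 2
    ring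
  rw [legendre_eq (n+1), legendre_eq (n+2), derivative_C_mul, ← itd_succ' (n+1) (Y (n+1))]
  apply Polynomial.funext; intro r
  have kr1 := congrArg (eval r) k1
  have kr2 := congrArg (eval r) k2
  simp only [eval_mul, eval_add, eval_sub, eval_pow, eval_C, eval_X, eval_one] at kr1 kr2 ⊢
  linear_combination (cc (n+1)) * kr1 - (((n:ℝ)+2) * cc (n+2)) * kr2
    - (((n:ℝ)+2) * (r * eval r (derivative^[n+1] (Y (n+1)))
        + ((n:ℝ)+1) * eval r (derivative^[n] (Y (n+1))))) * cs

end RadauAux2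

namespace RadauAux3
open RadauAux RadauAux2

lemma legendre_zero : legendre 0 = 1 := by
  simp [legendre]

lemma legendre_one : legendre 1 = X := by
  rw [legendre_eq]
  have h : derivative^[1] (Y 1) = C 2 * X := by
    unfold Y
    simp [derivative_X_pow]
    rw [← C_1, ← C_add]; norm_num
  rw [h, ← mul_assoc, ← C_mul]
  norm_num [cc]


noncomputable def p (n : ℕ) (x : ℝ) : ℝ := (legendre n).eval x
noncomputable def dp (n : ℕ) (x : ℝ) : ℝ := (derivative (legendre n)).eval x

lemma p_zero (x : ℝ) : p 0 x = 1 := by simp [p, legendre_zero]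
lemma p_one (x : ℝ) : p 1 x = x := by simp [p, legendre_one]
lemma dp_zero (x : ℝ) : dp 0 x = 0 := by simp [dp, legendre_zero]

lemma evalA (n : ℕ) (x : ℝ) : dp (n+1) x = x * dp n x + ((n:ℝ)+1) * p n x := by
  have h := congrArg (eval x) (identA n)
  simpa [dp, p, eval_mul, eval_add] using h

lemma evalB (n : ℕ) (x : ℝ) :
    (x^2 - 1) * dp (n+1) x = ((n:ℝ)+2) * (p (n+2) x - x * p (n+1) x) := by
  have h := congrArg (eval x) (identB n)
  simpa [dp, p, eval_mul, eval_add, eval_sub, eval_pow] using h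

lemma evalB0 (x : ℝ) : (x^2 - 1) * dp 0 x = (1:ℝ) * (p 1 x - x * p 0 x) := by
  rw [dp_zero, p_one, p_zero]; ring

lemma bonnet (n : ℕ) (x : ℝ) :
    ((n:ℝ)+2) * p (n+2) x = (2*(n:ℝ)+3) * x * p (n+1) x - ((n:ℝ)+1) * p n x := by
  have hB1 := evalB n x
  have hA := evalA n x
  have hB0 : (x^2-1) * dp n x = ((n:ℝ)+1) * (p (n+1) x - x * p n x) := by
    cases n with
    | zero => simpa using evalB0 x
    | succ m =>
        have := evalB m x
        push_cast at this ⊢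
        linear_combination this
  linear_combination (-1 : ℝ) * hB1 + (x^2-1) * hA + x * hB0

end RadauAux3

namespace RadauAux4
open RadauAux RadauAux2 RadauAux3

lemma genGrowth (f : ℕ → ℝ) (y : ℝ) (hy : 1 ≤ y) (hf0 : f 0 = 1) (hf1 : f 1 = y)
    (hrec : ∀ n : ℕ, ((n:ℝ)+2) * f (n+2) = (2*(n:ℝ)+3) * y * f (n+1) - ((n:ℝ)+1) * f n) :
    ∀ n : ℕ, 0 < f n ∧ y * f n ≤ f (n+1) := by
  intro n
  induction n with
  | zero => constructor
            · rw [hf0]; norm_num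
            · rw [hf0, hf1]; ring_nf; exact le_refl y
  | succ m ih =>
      obtain ⟨h0, h1⟩ := ih
      have hrm := hrec m
      have hfm1 : 0 < f (m+1) := lt_of_lt_of_le (by positivity) h1
      constructor
      · exact hfm1
      · -- y * f (m+1) ≤ f (m+2)
        have hm : f m ≤ f (m+1) := le_trans (le_mul_of_one_le_left h0.le hy) h1
        have hn2 : (0:ℝ) < (m:ℝ)+2 := by positivity
        rw [← mul_le_mul_iff_right₀ hn2]
        calc ((m:ℝ)+2) * (y * f (m+1)) ≤ ((2*(m:ℝ)+3) * y - ((m:ℝ)+1)) * f (m+1) := by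
              have hy0 : (0:ℝ) < y := lt_of_lt_of_le one_pos hy
              nlinarith [mul_le_mul_of_nonneg_left hy (le_of_lt hfm1)]
          _ ≤ ((m:ℝ)+2) * f (m+2) := by nlinarith [hrm, hm, hfm1]
        
lemma p_growth {x : ℝ} (hx : 1 ≤ x) (n : ℕ) : 0 < p n x ∧ x * p n x ≤ p (n+1) x := by
  refine genGrowth (fun n => p n x) x hx (p_zero x) (p_one x) (fun m => ?_) n
  exact bonnet m x

lemma p_alt {x : ℝ} (hx : x ≤ -1) (n : ℕ) :
    0 < (-1)^n * p n x ∧ (-x) * ((-1)^n * p n x) ≤ (-1)^(n+1) * p (n+1) x := by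
  refine genGrowth (fun n => (-1)^n * p n x) (-x) (by linarith) (by simp [p_zero])
    (by simp [p_one]) (fun m => ?_) n
  have hb := bonnet m x
  simp only [pow_succ]
  linear_combination ((-1:ℝ)^m) * hb

lemma p_at_one (n : ℕ) : p n 1 = 1 ∧ p (n+1) 1 = 1 := by
  induction n with
  | zero => exact ⟨p_zero 1, p_one 1⟩
  | succ m ih =>
      obtain ⟨h0, h1⟩ := ih
      refine ⟨h1, ?_⟩
      show p (m+2) 1 = 1
      have hb := bonnet m 1
      rw [h0, h1] at hb
      have hm2 : ((m:ℝ)+2) ≠ 0 := by positivity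
      have h2 : ((m:ℝ)+2) * p (m+2) 1 = ((m:ℝ)+2) * 1 := by linarith [hb]
      exact mul_left_cancel₀ hm2 h2

noncomputable def E (n : ℕ) (x : ℝ) : ℝ :=
    ((n:ℝ)+1)^2 * (p n x)^2 - (x^2-1) * (dp n x)^2

lemma E_pos (n : ℕ) (x : ℝ) : 0 < E n x := by
  induction n with
  | zero =>
      simp [E, p_zero, dp_zero]
  | succ m ih =>
      have hA := evalA m x
      have hB : (x^2-1) * dp m x = ((m:ℝ)+1) * (p (m+1) x - x * p m x) := by
        cases m with
        | zero => simpa using evalB0 x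
        | succ j =>
            have := evalB j x
            push_cast at this ⊢
            linear_combination this
      have key : E (m+1) x = (2*(m:ℝ)+3) * (p (m+1) x)^2 + E m x := by
        unfold E
        push_cast
        linear_combination (-(x^2-1)*(dp (m+1) x + x * dp m x + ((m:ℝ)+1) * p m x)) * hA
          + (-((x^2-1) * dp m x + ((m:ℝ)+1) * (p (m+1) x - x * p m x)) - 2*((m:ℝ)+1)*x*(p m x)) * hB
      rw [key]
      nlinarith [sq_nonneg (p (m+1) x), ih]

end RadauAux4

namespace RadauMain
open RadauAux RadauAux2 RadauAux3 RadauAux4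

lemma evalB' (n : ℕ) (x : ℝ) :
    (x^2 - 1) * dp n x = ((n:ℝ)+1) * (p (n+1) x - x * p n x) := by
  cases n with
  | zero => simpa using evalB0 x
  | succ j =>
      have := evalB j x
      push_cast at this ⊢
      linear_combination this

lemma W_pos {x : ℝ} (hx : (1:ℝ) < x) (k : ℕ) :
    0 < dp (k+1) x * p k x - dp k x * p (k+1) x := by
  have hA := evalA k x
  have hB := evalB' k x
  have hle : ((k:ℝ)+1) * (dp (k+1) x * p k x - dp k x * p (k+1) x) = E k x := by
    unfold E
    linear_combination (((k:ℝ)+1) * p k x) * hA + dp k x * hB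
  have hk1 : (0:ℝ) < (k:ℝ)+1 := by positivity
  nlinarith [E_pos k x, hle, hk1]

lemma ratio_strictAnti (k : ℕ) :
    StrictAntiOn (fun x => p k x / p (k+1) x) (Set.Ici (1:ℝ)) := by
  have hcont : ContinuousOn (fun x => p k x / p (k+1) x) (Set.Ici (1:ℝ)) := by
    apply ContinuousOn.div
    · exact (legendre k).continuous.continuousOn
    · exact (legendre (k+1)).continuous.continuousOn
    · intro x hx
      exact (p_growth (Set.mem_Ici.mp hx) (k+1)).1.ne'
  apply strictAntiOn_of_deriv_neg (convex_Ici 1) hcont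
  intro x hx
  rw [interior_Ici] at hx
  have hx1 : (1:ℝ) < x := hx
  have hpos : 0 < p (k+1) x := (p_growth hx1.le (k+1)).1
  have hd1 : HasDerivAt (fun y => p k y) (dp k x) x := (legendre k).hasDerivAt x
  have hd2 : HasDerivAt (fun y => p (k+1) y) (dp (k+1) x) x := (legendre (k+1)).hasDerivAt x
  have hdiv : HasDerivAt (fun y => p k y / p (k+1) y) _ x := hd1.div hd2 hpos.ne'
  rw [hdiv.deriv]
  apply div_neg_of_neg_of_pos
  · have := W_pos hx1 k
    nlinarith
  · positivity

end RadauMain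

open RadauAux RadauAux2 RadauAux3 RadauAux4 RadauMain

theorem special_radau_roots_odd (k : ℕ) (hk : Odd k) (θ : ℝ)
    (hθ : 1 / 2 < θ) (hθ1 : θ < 1) :
    (∃! x : ℝ, 1 < x ∧
      (Polynomial.C (2 * θ - 1) * legendre (k + 1) - legendre k).eval x = 0) ∧
    (∀ x : ℝ, x < -1 →
      (Polynomial.C (2 * θ - 1) * legendre (k + 1) - legendre k).eval x ≠ 0) := by
  have hθ' : 0 < 2*θ - 1 := by linarith
  have hRval : ∀ x : ℝ, (Polynomial.C (2 * θ - 1) * legendre (k + 1) - legendre k).eval x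
      = (2*θ-1) * p (k+1) x - p k x := by
    intro x
    simp [p, eval_sub, eval_mul, eval_C]
  constructor
  · -- existence and uniqueness of root > 1
    set x₀ : ℝ := max 2 (2/(2*θ-1)) with hx₀def
    have hx₀2 : (2:ℝ) ≤ x₀ := le_max_left _ _
    have hx₀1 : (1:ℝ) < x₀ := by linarith
    have hx₀b : 2/(2*θ-1) ≤ x₀ := le_max_right _ _
    have hf1 : (Polynomial.C (2 * θ - 1) * legendre (k + 1) - legendre k).eval 1 < 0 := by
      rw [hRval 1, (p_at_one k).1, (p_at_one k).2]
      linarith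
    have hfx₀ : 0 < (Polynomial.C (2 * θ - 1) * legendre (k + 1) - legendre k).eval x₀ := by
      rw [hRval x₀]
      have hg := p_growth (by linarith : (1:ℝ) ≤ x₀) k
      have hpk : 0 < p k x₀ := hg.1
      have hpk1 : x₀ * p k x₀ ≤ p (k+1) x₀ := hg.2
      have h2 : 2 ≤ (2*θ-1) * x₀ := by
        rw [div_le_iff₀ hθ'] at hx₀b
        linarith
      nlinarith
    -- IVT
    have hcont : ContinuousOn
        (fun x => (Polynomial.C (2 * θ - 1) * legendre (k + 1) - legendre k).eval x)
        (Set.Icc 1 x₀) :=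
      (Polynomial.C (2 * θ - 1) * legendre (k + 1) - legendre k).continuous.continuousOn
    have hIvt := intermediate_value_Ioo (le_of_lt hx₀1) hcont
    have h0mem : (0:ℝ) ∈ Set.Ioo
        ((Polynomial.C (2 * θ - 1) * legendre (k + 1) - legendre k).eval 1)
        ((Polynomial.C (2 * θ - 1) * legendre (k + 1) - legendre k).eval x₀) :=
      ⟨hf1, hfx₀⟩
    obtain ⟨c, hcmem, hfc⟩ := hIvt h0mem
    have hc1 : 1 < c := hcmem.1
    -- ratio characterisation
    have hratio : ∀ y : ℝ, 1 < y →
        (Polynomial.C (2 * θ - 1) * legendre (k + 1) - legendre k).eval y = 0 →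
        p k y / p (k+1) y = 2*θ-1 := by
      intro y hy hy0
      rw [hRval y] at hy0
      have hpos : 0 < p (k+1) y := (p_growth hy.le (k+1)).1
      rw [div_eq_iff hpos.ne']
      linarith
    refine ⟨c, ⟨hc1, hfc⟩, ?_⟩
    intro y hy
    have hinj := (ratio_strictAnti k).injOn
    have h1 : p k y / p (k+1) y = p k c / p (k+1) c := by
      rw [hratio y hy.1 hy.2, hratio c hc1 hfc]
    exact hinj (Set.mem_Ici.mpr hy.1.le) (Set.mem_Ici.mpr hc1.le) h1
  · -- no roots below -1
    intro x hx
    rw [hRval x]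
    have ha := p_alt hx.le k
    have hka : (-1:ℝ)^k = -1 := Odd.neg_one_pow hk
    have hkb : (-1:ℝ)^(k+1) = 1 := by
      rw [pow_succ, hka]; norm_num
    have hpk : p k x < 0 := by
      have := ha.1; rw [hka] at this; linarith
    have hpk1 : 0 < p (k+1) x := by
      have h1 := ha.2
      rw [hka, hkb] at h1
      have h2 : 0 < (-x) * (-1 * p k x) := by
        apply mul_pos (by linarith)
        nlinarith
      linarith
    have : 0 < (2*θ-1) * p (k+1) x - p k x := by nlinarith
    linarith
end
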